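/- Let (M, λ_i) be an AP-space on ℝⁿ (n ≥ 2) and let λ̄_i = e^{−ρ} λ_i be a conformal change with smooth conformal factor ρ. Then the Levi-Civita covariant derivative of the contracted torsion transforms as C̄_{μ;;ν} = C_{μ;ν} + (n−1) ρ_{μ;ν} − (C_μ ρ_ν + C_ν ρ_μ − g_{μν} C_ε ρ^ε) − (n−1)(2 ρ_μ ρ_ν − g_{μν} ρ²), where ; and ;; denote covariant differentiation with respect to the Levi-Civita connections Γ° of g and Γ̄° of ḡ = e^{2ρ} g respectively, ρ_μ := ∂ρ/∂x^μ, ρ^ε := g^{εη} ρ_η, and ρ² := ρ_ε ρ^ε. -/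

import Mathlib

open scoped BigOperators

noncomputable section

/-- Kronecker delta as a real number. -/
def kron {n : ℕ} (α μ : Fin n) : ℝ := if α = μ then 1 else 0

/-- Partial derivative `∂_ν f` of a scalar function on ℝⁿ. -/
def pd {n : ℕ} (ν : Fin n) (f : (Fin n → ℝ) → ℝ) (x : Fin n → ℝ) : ℝ :=
  fderiv ℝ f x (Pi.single ν 1)

/-- Weitzenböck connection `Γ^α_{μν} = Σ_i λ_i^α ∂_ν λ_{i,μ}`. -/
def Wconn {n : ℕ} (lam lamCov : Fin n → (Fin n → ℝ) → Fin n → ℝ)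
    (α μ ν : Fin n) (x : Fin n → ℝ) : ℝ :=
  ∑ i, lam i x α * pd ν (fun y => lamCov i y μ) x

/-- Torsion `Λ^α_{μν}` of the Weitzenböck connection. -/
def tors {n : ℕ} (lam lamCov : Fin n → (Fin n → ℝ) → Fin n → ℝ)
    (α μ ν : Fin n) (x : Fin n → ℝ) : ℝ :=
  Wconn lam lamCov α μ ν x - Wconn lam lamCov α ν μ x

/-- Contracted torsion (basic vector) `C_μ = Λ^ε_{εμ}`. -/
def Cvec {n : ℕ} (lam lamCov : Fin n → (Fin n → ℝ) → Fin n → ℝ)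
    (μ : Fin n) (x : Fin n → ℝ) : ℝ :=
  ∑ ε, tors lam lamCov ε ε μ x

/-- Metric `g_{μν} = Σ_i λ_{i,μ} λ_{i,ν}`. -/
def gmet {n : ℕ} (lamCov : Fin n → (Fin n → ℝ) → Fin n → ℝ)
    (μ ν : Fin n) (x : Fin n → ℝ) : ℝ :=
  ∑ i, lamCov i x μ * lamCov i x ν

/-- Inverse metric `g^{μν} = Σ_i λ_i^μ λ_i^ν`. -/
def ginv {n : ℕ} (lam : Fin n → (Fin n → ℝ) → Fin n → ℝ)
    (μ ν : Fin n) (x : Fin n → ℝ) : ℝ :=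
  ∑ i, lam i x μ * lam i x ν

/-- Levi-Civita connection (Christoffel symbols) of the metric `g`. -/
def LC {n : ℕ} (lam lamCov : Fin n → (Fin n → ℝ) → Fin n → ℝ)
    (α μ ν : Fin n) (x : Fin n → ℝ) : ℝ :=
  (1/2) * ∑ ε, ginv lam α ε x *
    (pd μ (fun y => gmet lamCov ε ν y) x + pd ν (fun y => gmet lamCov ε μ y) x
      - pd ε (fun y => gmet lamCov μ ν y) x)

/-- Curvature tensor `R[A]^α_{μνσ}` of connection coefficients `A`. -/
def curv {n : ℕ} (A : Fin n → Fin n → Fin n → (Fin n → ℝ) → ℝ)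
    (α μ ν σ : Fin n) (x : Fin n → ℝ) : ℝ :=
  pd ν (A α μ σ) x - pd σ (A α μ ν) x
    + ∑ ε, A ε μ σ x * A α ε ν x - ∑ ε, A ε μ ν x * A α ε σ x

/-- Conformal change of the contravariant components: `λ̄_i^μ = e^{-ρ} λ_i^μ`. -/
def confLam {n : ℕ} (ρ : (Fin n → ℝ) → ℝ) (lam : Fin n → (Fin n → ℝ) → Fin n → ℝ) :
    Fin n → (Fin n → ℝ) → Fin n → ℝ :=
  fun i x μ => Real.exp (-(ρ x)) * lam i x μ

/-- Conformal change of the covariant components: `λ̄_{i,μ} = e^{ρ} λ_{i,μ}`. -/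
def confLamCov {n : ℕ} (ρ : (Fin n → ℝ) → ℝ) (lamCov : Fin n → (Fin n → ℝ) → Fin n → ℝ) :
    Fin n → (Fin n → ℝ) → Fin n → ℝ :=
  fun i x μ => Real.exp (ρ x) * lamCov i x μ

/-- `ρ^α := g^{αε} ρ_ε`. -/
def rhoUp {n : ℕ} (lam : Fin n → (Fin n → ℝ) → Fin n → ℝ) (ρ : (Fin n → ℝ) → ℝ)
    (α : Fin n) (x : Fin n → ℝ) : ℝ :=
  ∑ ε, ginv lam α ε x * pd ε ρ x

/-- `ρ² := ρ^ε ρ_ε`. -/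
def rhoSq {n : ℕ} (lam : Fin n → (Fin n → ℝ) → Fin n → ℝ) (ρ : (Fin n → ℝ) → ℝ)
    (x : Fin n → ℝ) : ℝ :=
  ∑ ε, rhoUp lam ρ ε x * pd ε ρ x

/-- Covariant derivative of a covector field: `X_{μ|ν} = ∂_ν X_μ − A^ε_{μν} X_ε`. -/
def covD {n : ℕ} (A : Fin n → Fin n → Fin n → (Fin n → ℝ) → ℝ)
    (X : Fin n → (Fin n → ℝ) → ℝ) (μ ν : Fin n) (x : Fin n → ℝ) : ℝ :=
  pd ν (X μ) x - ∑ ε, A ε μ ν x * X ε x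

/-- Covariant derivative of a vector field: `X^α_{|ν} = ∂_ν X^α + A^α_{εν} X^ε`. -/
def covDUp {n : ℕ} (A : Fin n → Fin n → Fin n → (Fin n → ℝ) → ℝ)
    (X : Fin n → (Fin n → ℝ) → ℝ) (α ν : Fin n) (x : Fin n → ℝ) : ℝ :=
  pd ν (X α) x + ∑ ε, A α ε ν x * X ε x

/-- Symmetric part `Γ̂^α_{μν}` of the Weitzenböck connection. -/
def symW {n : ℕ} (lam lamCov : Fin n → (Fin n → ℝ) → Fin n → ℝ)
    (α μ ν : Fin n) (x : Fin n → ℝ) : ℝ :=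
  (1/2) * (Wconn lam lamCov α μ ν x + Wconn lam lamCov α ν μ x)

/-- The conformally invariant tensor `T^α_{μν}`. -/
def Ttens {n : ℕ} (lam lamCov : Fin n → (Fin n → ℝ) → Fin n → ℝ)
    (α μ ν : Fin n) (x : Fin n → ℝ) : ℝ :=
  tors lam lamCov α μ ν x
    - ((n : ℝ) - 1)⁻¹ * (kron α μ * Cvec lam lamCov ν x - kron α ν * Cvec lam lamCov μ x)

/-- The conformally invariant tensor `K^α_{μνσ}`. -/
def Ktens {n : ℕ} (lam lamCov : Fin n → (Fin n → ℝ) → Fin n → ℝ)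
    (α μ ν σ : Fin n) (x : Fin n → ℝ) : ℝ :=
  ((n : ℝ) - 1)⁻¹ *
    (kron α μ * pd σ (Cvec lam lamCov ν) x - kron α μ * pd ν (Cvec lam lamCov σ) x)

/-- The conformal connection `𝚪^α_{μν} = Γ^α_{μν} − (1/(n−1)) δ^α_μ C_ν`. -/
def bConn {n : ℕ} (lam lamCov : Fin n → (Fin n → ℝ) → Fin n → ℝ)
    (α μ ν : Fin n) (x : Fin n → ℝ) : ℝ :=
  Wconn lam lamCov α μ ν x - ((n : ℝ) - 1)⁻¹ * (kron α μ * Cvec lam lamCov ν x)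

/-- The conformal connection `𝚪̂^α_{μν} = Γ̂^α_{μν} − (1/(2(n−1)))(δ^α_μ C_ν + δ^α_ν C_μ)`. -/
def hatConn {n : ℕ} (lam lamCov : Fin n → (Fin n → ℝ) → Fin n → ℝ)
    (α μ ν : Fin n) (x : Fin n → ℝ) : ℝ :=
  symW lam lamCov α μ ν x
    - (2 * ((n : ℝ) - 1))⁻¹ * (kron α μ * Cvec lam lamCov ν x + kron α ν * Cvec lam lamCov μ x)

/-- `C_{μ ĥ|ν}`: covariant derivative of `C` with respect to `Γ̂`. -/
def Chat {n : ℕ} (lam lamCov : Fin n → (Fin n → ℝ) → Fin n → ℝ)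
    (μ ν : Fin n) (x : Fin n → ℝ) : ℝ :=
  covD (symW lam lamCov) (Cvec lam lamCov) μ ν x

/-- The conformally invariant tensor `B^α_{μνσ}`. -/
def Btens {n : ℕ} (lam lamCov : Fin n → (Fin n → ℝ) → Fin n → ℝ)
    (α μ ν σ : Fin n) (x : Fin n → ℝ) : ℝ :=
  curv (symW lam lamCov) α μ ν σ x
    - (2 * ((n : ℝ) - 1))⁻¹ *
      (kron α μ * pd ν (Cvec lam lamCov σ) x - kron α μ * pd σ (Cvec lam lamCov ν) x
        + kron α σ * Chat lam lamCov μ ν x - kron α ν * Chat lam lamCov μ σ x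
        - (2 * ((n : ℝ) - 1))⁻¹ * kron α ν * Cvec lam lamCov μ x * Cvec lam lamCov σ x
        + (2 * ((n : ℝ) - 1))⁻¹ * kron α σ * Cvec lam lamCov μ x * Cvec lam lamCov ν x)

/-- `C^σ := g^{σε} C_ε`. -/
def Cup {n : ℕ} (lam lamCov : Fin n → (Fin n → ℝ) → Fin n → ℝ)
    (σ : Fin n) (x : Fin n → ℝ) : ℝ :=
  ∑ ε, ginv lam σ ε x * Cvec lam lamCov ε x

/-- `C² := C_ε C^ε = g^{εη} C_ε C_η`. -/
def Csq {n : ℕ} (lam lamCov : Fin n → (Fin n → ℝ) → Fin n → ℝ)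
    (x : Fin n → ℝ) : ℝ :=
  ∑ ε, Cvec lam lamCov ε x * Cup lam lamCov ε x

/-- The tensor `S_{μν} := ρ_{μ;ν} − ρ_μ ρ_ν − ½ g_{μν} ρ²`. -/
def Stens {n : ℕ} (lam lamCov : Fin n → (Fin n → ℝ) → Fin n → ℝ)
    (ρ : (Fin n → ℝ) → ℝ) (μ ν : Fin n) (x : Fin n → ℝ) : ℝ :=
  covD (LC lam lamCov) (fun μ => pd μ ρ) μ ν x
    - pd μ ρ x * pd ν ρ x - (1/2) * gmet lamCov μ ν x * rhoSq lam ρ x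

/-- The conformal connection `𝚪°^α_{μν} = Γ°^α_{μν} − (1/(n−1))(δ^α_μ C_ν + δ^α_ν C_μ − g_{μν} C^α)`. -/
def oConn {n : ℕ} (lam lamCov : Fin n → (Fin n → ℝ) → Fin n → ℝ)
    (α μ ν : Fin n) (x : Fin n → ℝ) : ℝ :=
  LC lam lamCov α μ ν x
    - ((n : ℝ) - 1)⁻¹ *
      (kron α μ * Cvec lam lamCov ν x + kron α ν * Cvec lam lamCov μ x
        - gmet lamCov μ ν x * Cup lam lamCov α x)

end

section AuxLemmas

open Finset

variable {n : ℕ}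

lemma contDiff_pd {f : (Fin n → ℝ) → ℝ} (hf : ContDiff ℝ (⊤ : ℕ∞) f) (ν : Fin n) :
    ContDiff ℝ (⊤ : ℕ∞) (pd ν f) := by
  unfold pd
  exact (hf.fderiv_right (by simp)).clm_apply contDiff_const

variable {f g : (Fin n → ℝ) → ℝ} {x : Fin n → ℝ} {ν : Fin n}

lemma pd_add (hf : DifferentiableAt ℝ f x) (hg : DifferentiableAt ℝ g x) :
    pd ν (fun y => f y + g y) x = pd ν f x + pd ν g x := by
  unfold pd; rw [fderiv_fun_add hf hg]; simp

lemma pd_mul (hf : DifferentiableAt ℝ f x) (hg : DifferentiableAt ℝ g x) :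
    pd ν (fun y => f y * g y) x = pd ν f x * g x + f x * pd ν g x := by
  unfold pd; rw [fderiv_fun_mul hf hg]; simp; ring

lemma pd_const_mul (c : ℝ) (hf : DifferentiableAt ℝ f x) :
    pd ν (fun y => c * f y) x = c * pd ν f x := by
  unfold pd; rw [fderiv_const_mul hf]; simp

lemma pd_exp (hf : DifferentiableAt ℝ f x) :
    pd ν (fun y => Real.exp (f y)) x = Real.exp (f x) * pd ν f x := by
  unfold pd; rw [fderiv_exp hf]; simp

lemma sum_kron_mul (μ : Fin n) (f : Fin n → ℝ) : ∑ ε, kron ε μ * f ε = f μ := by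
  simp [kron, ite_mul]

lemma smooth_gmet (lamCov : Fin n → (Fin n → ℝ) → Fin n → ℝ)
    (hlamCov : ∀ i μ, ContDiff ℝ (⊤ : ℕ∞) fun x => lamCov i x μ) (μ ν : Fin n) :
    ContDiff ℝ (⊤ : ℕ∞) (fun x => gmet lamCov μ ν x) := by
  unfold gmet
  exact ContDiff.sum fun i _ => (hlamCov i μ).mul (hlamCov i ν)

lemma smooth_Wconn (lam lamCov : Fin n → (Fin n → ℝ) → Fin n → ℝ)
    (hlam : ∀ i μ, ContDiff ℝ (⊤ : ℕ∞) fun x => lam i x μ)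
    (hlamCov : ∀ i μ, ContDiff ℝ (⊤ : ℕ∞) fun x => lamCov i x μ) (α μ ν : Fin n) :
    ContDiff ℝ (⊤ : ℕ∞) (fun x => Wconn lam lamCov α μ ν x) := by
  unfold Wconn
  exact ContDiff.sum fun i _ => (hlam i α).mul (contDiff_pd (hlamCov i μ) ν)

lemma smooth_Cvec (lam lamCov : Fin n → (Fin n → ℝ) → Fin n → ℝ)
    (hlam : ∀ i μ, ContDiff ℝ (⊤ : ℕ∞) fun x => lam i x μ)
    (hlamCov : ∀ i μ, ContDiff ℝ (⊤ : ℕ∞) fun x => lamCov i x μ) (μ : Fin n) :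
    ContDiff ℝ (⊤ : ℕ∞) (fun x => Cvec lam lamCov μ x) := by
  unfold Cvec tors
  exact ContDiff.sum fun ε _ =>
    (smooth_Wconn lam lamCov hlam hlamCov ε ε μ).sub
      (smooth_Wconn lam lamCov hlam hlamCov ε μ ε)

end AuxLemmas

section ConfLemmas

open Finset

variable {n : ℕ} (lam lamCov : Fin n → (Fin n → ℝ) → Fin n → ℝ)
  (ρ : (Fin n → ℝ) → ℝ)

lemma Wconn_conf
    (hlamCov : ∀ i μ, ContDiff ℝ (⊤ : ℕ∞) fun x => lamCov i x μ)
    (hρ : ContDiff ℝ (⊤ : ℕ∞) ρ)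
    (hinv : ∀ (x : Fin n → ℝ) (μ ν : Fin n), ∑ i, lam i x μ * lamCov i x ν = kron μ ν)
    (α β γ : Fin n) (x : Fin n → ℝ) :
    Wconn (confLam ρ lam) (confLamCov ρ lamCov) α β γ x
      = kron α β * pd γ ρ x + Wconn lam lamCov α β γ x := by
  have hρx : DifferentiableAt ℝ ρ x := (hρ.differentiable (by simp)) x
  have key : ∀ i : Fin n,
      Real.exp (-(ρ x)) * lam i x α
        * pd γ (fun y => Real.exp (ρ y) * lamCov i y β) x
      = lam i x α * lamCov i x β * pd γ ρ x
        + lam i x α * pd γ (fun y => lamCov i y β) x := by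
    intro i
    rw [pd_mul (hρx.exp) ((hlamCov i β).differentiable (by simp) x), pd_exp hρx]
    have he : Real.exp (-(ρ x)) * Real.exp (ρ x) = 1 := by
      rw [← Real.exp_add]; simp
    have : Real.exp (-(ρ x)) * lam i x α *
        (Real.exp (ρ x) * pd γ ρ x * lamCov i x β
          + Real.exp (ρ x) * pd γ (fun y => lamCov i y β) x)
      = (Real.exp (-(ρ x)) * Real.exp (ρ x)) *
        (lam i x α * lamCov i x β * pd γ ρ x
          + lam i x α * pd γ (fun y => lamCov i y β) x) := by ring
    rw [this, he, one_mul]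
  unfold Wconn confLam confLamCov
  rw [Finset.sum_congr rfl fun i _ => key i, Finset.sum_add_distrib,
    ← Finset.sum_mul, hinv x α β]

lemma Cvec_conf
    (hlamCov : ∀ i μ, ContDiff ℝ (⊤ : ℕ∞) fun x => lamCov i x μ)
    (hρ : ContDiff ℝ (⊤ : ℕ∞) ρ)
    (hinv : ∀ (x : Fin n → ℝ) (μ ν : Fin n), ∑ i, lam i x μ * lamCov i x ν = kron μ ν)
    (μ : Fin n) (x : Fin n → ℝ) :
    Cvec (confLam ρ lam) (confLamCov ρ lamCov) μ x
      = Cvec lam lamCov μ x + ((n : ℝ) - 1) * pd μ ρ x := by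
  unfold Cvec tors
  have key : ∀ ε : Fin n,
      Wconn (confLam ρ lam) (confLamCov ρ lamCov) ε ε μ x
        - Wconn (confLam ρ lam) (confLamCov ρ lamCov) ε μ ε x
      = (Wconn lam lamCov ε ε μ x - Wconn lam lamCov ε μ ε x)
        + (kron ε ε * pd μ ρ x - kron ε μ * pd ε ρ x) := by
    intro ε
    rw [Wconn_conf lam lamCov ρ hlamCov hρ hinv,
      Wconn_conf lam lamCov ρ hlamCov hρ hinv]
    ring
  rw [Finset.sum_congr rfl fun ε _ => key ε, Finset.sum_add_distrib,
    Finset.sum_sub_distrib, Finset.sum_sub_distrib]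
  have h1 : ∑ ε : Fin n, kron ε ε * pd μ ρ x = (n : ℝ) * pd μ ρ x := by
    simp [kron, Finset.sum_const, Finset.card_univ]
  have h2 : ∑ ε : Fin n, kron ε μ * pd ε ρ x = pd μ ρ x :=
    sum_kron_mul μ _
  rw [h1, h2]; ring

lemma gmet_conf (μ ν : Fin n) (x : Fin n → ℝ) :
    gmet (confLamCov ρ lamCov) μ ν x = Real.exp (2 * ρ x) * gmet lamCov μ ν x := by
  unfold gmet confLamCov
  rw [Finset.mul_sum]
  refine Finset.sum_congr rfl fun i _ => ?_
  rw [show (2:ℝ) * ρ x = ρ x + ρ x by ring, Real.exp_add]; ring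

lemma ginv_conf (μ ν : Fin n) (x : Fin n → ℝ) :
    ginv (confLam ρ lam) μ ν x = Real.exp (-(2 * ρ x)) * ginv lam μ ν x := by
  unfold ginv confLam
  rw [Finset.mul_sum]
  refine Finset.sum_congr rfl fun i _ => ?_
  rw [show -((2:ℝ) * ρ x) = -ρ x + -ρ x by ring, Real.exp_add]; ring

lemma pd_gmet_conf
    (hlamCov : ∀ i μ, ContDiff ℝ (⊤ : ℕ∞) fun x => lamCov i x μ)
    (hρ : ContDiff ℝ (⊤ : ℕ∞) ρ)
    (σ μ ν : Fin n) (x : Fin n → ℝ) :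
    pd σ (fun y => gmet (confLamCov ρ lamCov) μ ν y) x
      = Real.exp (2 * ρ x) *
        (2 * pd σ ρ x * gmet lamCov μ ν x + pd σ (fun y => gmet lamCov μ ν y) x) := by
  have h2ρ : DifferentiableAt ℝ (fun y => 2 * ρ y) x :=
    ((hρ.differentiable (by simp)) x).const_mul 2
  have hg : DifferentiableAt ℝ (fun y => gmet lamCov μ ν y) x :=
    (smooth_gmet lamCov hlamCov μ ν).differentiable (by simp) x
  have hfun : (fun y => gmet (confLamCov ρ lamCov) μ ν y)
      = fun y => Real.exp (2 * ρ y) * gmet lamCov μ ν y :=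
    funext fun y => gmet_conf lamCov ρ μ ν y
  rw [hfun, pd_mul h2ρ.exp hg, pd_exp h2ρ,
    pd_const_mul 2 ((hρ.differentiable (by simp)) x)]
  ring

lemma ginv_gmet
    (hinv : ∀ (x : Fin n → ℝ) (μ ν : Fin n), ∑ i, lam i x μ * lamCov i x ν = kron μ ν)
    (hinv' : ∀ (x : Fin n → ℝ) (i j : Fin n), ∑ μ, lam i x μ * lamCov j x μ = kron i j)
    (α ν : Fin n) (x : Fin n → ℝ) :
    ∑ ε, ginv lam α ε x * gmet lamCov ε ν x = kron α ν := by
  unfold ginv gmet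
  have step : ∀ ε : Fin n,
      (∑ i, lam i x α * lam i x ε) * (∑ j, lamCov j x ε * lamCov j x ν)
      = ∑ i, ∑ j, (lam i x α * lamCov j x ν) * (lam i x ε * lamCov j x ε) := by
    intro ε
    rw [Finset.sum_mul_sum]
    exact Finset.sum_congr rfl fun i _ => Finset.sum_congr rfl fun j _ => by ring
  rw [Finset.sum_congr rfl fun ε _ => step ε, Finset.sum_comm]
  have step2 : ∀ i : Fin n,
      ∑ ε, ∑ j, (lam i x α * lamCov j x ν) * (lam i x ε * lamCov j x ε)
      = lam i x α * lamCov i x ν := by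
    intro i
    rw [Finset.sum_comm]
    have : ∀ j : Fin n,
        ∑ ε, (lam i x α * lamCov j x ν) * (lam i x ε * lamCov j x ε)
        = (lam i x α * lamCov j x ν) * kron i j := by
      intro j
      rw [← Finset.mul_sum, hinv' x i j]
    rw [Finset.sum_congr rfl fun j _ => this j]
    simp [kron, mul_ite]
  rw [Finset.sum_congr rfl fun i _ => step2 i, hinv x α ν]

end ConfLemmas

section LCConf

open Finset

variable {n : ℕ} (lam lamCov : Fin n → (Fin n → ℝ) → Fin n → ℝ)
  (ρ : (Fin n → ℝ) → ℝ)

lemma LC_conf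
    (hlamCov : ∀ i μ, ContDiff ℝ (⊤ : ℕ∞) fun x => lamCov i x μ)
    (hρ : ContDiff ℝ (⊤ : ℕ∞) ρ)
    (hinv : ∀ (x : Fin n → ℝ) (μ ν : Fin n), ∑ i, lam i x μ * lamCov i x ν = kron μ ν)
    (hinv' : ∀ (x : Fin n → ℝ) (i j : Fin n), ∑ μ, lam i x μ * lamCov j x μ = kron i j)
    (α μ ν : Fin n) (x : Fin n → ℝ) :
    LC (confLam ρ lam) (confLamCov ρ lamCov) α μ ν x
      = LC lam lamCov α μ ν x + kron α μ * pd ν ρ x + kron α ν * pd μ ρ x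
        - gmet lamCov μ ν x * rhoUp lam ρ α x := by
  unfold LC
  have key : ∀ ε : Fin n,
      ginv (confLam ρ lam) α ε x *
        (pd μ (fun y => gmet (confLamCov ρ lamCov) ε ν y) x
          + pd ν (fun y => gmet (confLamCov ρ lamCov) ε μ y) x
          - pd ε (fun y => gmet (confLamCov ρ lamCov) μ ν y) x)
      = ginv lam α ε x *
          (pd μ (fun y => gmet lamCov ε ν y) x + pd ν (fun y => gmet lamCov ε μ y) x
            - pd ε (fun y => gmet lamCov μ ν y) x)
        + (2 * pd μ ρ x) * (ginv lam α ε x * gmet lamCov ε ν x)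
        + (2 * pd ν ρ x) * (ginv lam α ε x * gmet lamCov ε μ x)
        - (2 * gmet lamCov μ ν x) * (ginv lam α ε x * pd ε ρ x) := by
    intro ε
    rw [ginv_conf, pd_gmet_conf lamCov ρ hlamCov hρ, pd_gmet_conf lamCov ρ hlamCov hρ,
      pd_gmet_conf lamCov ρ hlamCov hρ]
    have he : Real.exp (-(2 * ρ x)) * Real.exp (2 * ρ x) = 1 := by
      rw [← Real.exp_add]; simp
    set E := Real.exp (2 * ρ x)
    set E' := Real.exp (-(2 * ρ x))
    have h0 : E' * ginv lam α ε x *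
        (E * (2 * pd μ ρ x * gmet lamCov ε ν x + pd μ (fun y => gmet lamCov ε ν y) x)
          + E * (2 * pd ν ρ x * gmet lamCov ε μ x + pd ν (fun y => gmet lamCov ε μ y) x)
          - E * (2 * pd ε ρ x * gmet lamCov μ ν x + pd ε (fun y => gmet lamCov μ ν y) x))
      = (E' * E) *
        (ginv lam α ε x *
          (pd μ (fun y => gmet lamCov ε ν y) x + pd ν (fun y => gmet lamCov ε μ y) x
            - pd ε (fun y => gmet lamCov μ ν y) x)
        + (2 * pd μ ρ x) * (ginv lam α ε x * gmet lamCov ε ν x)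
        + (2 * pd ν ρ x) * (ginv lam α ε x * gmet lamCov ε μ x)
        - (2 * gmet lamCov μ ν x) * (ginv lam α ε x * pd ε ρ x)) := by ring
    rw [h0, he, one_mul]
  rw [Finset.sum_congr rfl fun ε _ => key ε, Finset.sum_sub_distrib,
    Finset.sum_add_distrib, Finset.sum_add_distrib,
    ← Finset.mul_sum, ← Finset.mul_sum, ← Finset.mul_sum,
    ginv_gmet lam lamCov hinv hinv' α ν x, ginv_gmet lam lamCov hinv hinv' α μ x]
  have hρup : ∑ ε, ginv lam α ε x * pd ε ρ x = rhoUp lam ρ α x := rfl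
  rw [hρup]
  ring

end LCConf

theorem Cvec_covDeriv_conformal_change
    {n : ℕ} (hn : 2 ≤ n)
    (lam lamCov : Fin n → (Fin n → ℝ) → Fin n → ℝ)
    (hlam : ∀ i μ, ContDiff ℝ (⊤ : ℕ∞) fun x => lam i x μ)
    (hlamCov : ∀ i μ, ContDiff ℝ (⊤ : ℕ∞) fun x => lamCov i x μ)
    (hinv : ∀ (x : Fin n → ℝ) (μ ν : Fin n), ∑ i, lam i x μ * lamCov i x ν = kron μ ν)
    (hinv' : ∀ (x : Fin n → ℝ) (i j : Fin n), ∑ μ, lam i x μ * lamCov j x μ = kron i j)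
    (ρ : (Fin n → ℝ) → ℝ) (hρ : ContDiff ℝ (⊤ : ℕ∞) ρ)
    :
    ∀ (x : Fin n → ℝ) (μ ν : Fin n),
      covD (LC (confLam ρ lam) (confLamCov ρ lamCov))
          (Cvec (confLam ρ lam) (confLamCov ρ lamCov)) μ ν x
        = covD (LC lam lamCov) (Cvec lam lamCov) μ ν x
          + ((n : ℝ) - 1) * covD (LC lam lamCov) (fun μ => pd μ ρ) μ ν x
          - (Cvec lam lamCov μ x * pd ν ρ x + Cvec lam lamCov ν x * pd μ ρ x
              - gmet lamCov μ ν x * (∑ ε, Cvec lam lamCov ε x * rhoUp lam ρ ε x))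
          - ((n : ℝ) - 1) *
              (2 * pd μ ρ x * pd ν ρ x - gmet lamCov μ ν x * rhoSq lam ρ x) := by
  intro x μ ν
  have hCfun : Cvec (confLam ρ lam) (confLamCov ρ lamCov) μ
      = fun y => Cvec lam lamCov μ y + ((n : ℝ) - 1) * pd μ ρ y :=
    funext fun y => Cvec_conf lam lamCov ρ hlamCov hρ hinv μ y
  have hCd : DifferentiableAt ℝ (fun y => Cvec lam lamCov μ y) x :=
    (smooth_Cvec lam lamCov hlam hlamCov μ).differentiable (by simp) x
  have hpdρd : DifferentiableAt ℝ (pd μ ρ) x :=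
    (contDiff_pd hρ μ).differentiable (by simp) x
  have hmuld : DifferentiableAt ℝ (fun y => ((n : ℝ) - 1) * pd μ ρ y) x :=
    hpdρd.const_mul _
  unfold covD
  rw [hCfun, pd_add hCd hmuld, pd_const_mul ((n : ℝ) - 1) hpdρd]
  have hsum : ∑ ε, LC (confLam ρ lam) (confLamCov ρ lamCov) ε μ ν x *
        Cvec (confLam ρ lam) (confLamCov ρ lamCov) ε x
      = ∑ ε, (LC lam lamCov ε μ ν x * Cvec lam lamCov ε x
          + ((n : ℝ) - 1) * (LC lam lamCov ε μ ν x * pd ε ρ x)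
          + kron ε μ * (pd ν ρ x * (Cvec lam lamCov ε x + ((n : ℝ) - 1) * pd ε ρ x))
          + kron ε ν * (pd μ ρ x * (Cvec lam lamCov ε x + ((n : ℝ) - 1) * pd ε ρ x))
          - gmet lamCov μ ν x * (Cvec lam lamCov ε x * rhoUp lam ρ ε x)
          - (((n : ℝ) - 1) * gmet lamCov μ ν x) * (rhoUp lam ρ ε x * pd ε ρ x)) := by
    refine Finset.sum_congr rfl fun ε _ => ?_
    rw [LC_conf lam lamCov ρ hlamCov hρ hinv hinv',
      Cvec_conf lam lamCov ρ hlamCov hρ hinv]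
    ring
  rw [hsum, Finset.sum_sub_distrib, Finset.sum_sub_distrib,
    Finset.sum_add_distrib, Finset.sum_add_distrib, Finset.sum_add_distrib,
    ← Finset.mul_sum, ← Finset.mul_sum, ← Finset.mul_sum,
    sum_kron_mul μ (fun ε => pd ν ρ x * (Cvec lam lamCov ε x + ((n : ℝ) - 1) * pd ε ρ x)),
    sum_kron_mul ν (fun ε => pd μ ρ x * (Cvec lam lamCov ε x + ((n : ℝ) - 1) * pd ε ρ x))]
  have hrs : rhoSq lam ρ x = ∑ ε, rhoUp lam ρ ε x * pd ε ρ x := rfl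
  rw [hrs]
  ring
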